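/- For all large Q and x, V(ℕ,x,Q) = Σ_{Q/2 < q ≤ Q} q {x/q} (1 − {x/q}) + O(Q log² Q), where {·} denotes the fractional part and the implied constant is absolute. -/
import Mathlib

open scoped Classical

/-- `𝒜(z;q,b) := Σ_{n ≤ z, n ≡ b (mod q)} a_n`, for a real sequence `a`. -/
noncomputable def seqSum (a : ℕ → ℝ) (z : ℝ) (q b : ℕ) : ℝ :=
  ∑ n ∈ (Finset.Icc 1 ⌊z⌋₊).filter (fun n => n % q = b % q), a n

/-- `Aver(𝒜,z;q,h) := (1/φ(q/h)) Σ_{1 ≤ b ≤ q, (b,q)=h} 𝒜(z;q,b)`, for `h ∣ q`. -/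
noncomputable def seqAver (a : ℕ → ℝ) (z : ℝ) (q h : ℕ) : ℝ :=
  (1 / (Nat.totient (q / h) : ℝ)) *
    ∑ b ∈ (Finset.Icc 1 q).filter (fun b => Nat.gcd b q = h), seqSum a z q b

/-- The Barban–Davenport–Halberstam type variance
`V(𝒜,x,Q) := Σ_{Q/2 < q ≤ Q} Σ_{1 ≤ b ≤ q} |𝒜(x;q,b) − Aver(𝒜,x;q,(b,q))|²`. -/
noncomputable def varV (a : ℕ → ℝ) (x Q : ℝ) : ℝ :=
  ∑ q ∈ Finset.Ioc ⌊Q / 2⌋₊ ⌊Q⌋₊, ∑ b ∈ Finset.Icc 1 q,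
    (seqSum a x q b - seqAver a x q (Nat.gcd b q)) ^ 2

namespace St14
open Finset

noncomputable def Phi (M n : ℕ) : ℕ := ((Finset.Icc 1 M).filter (fun c => Nat.gcd c n = 1)).card


lemma Icc_one_eq_Ioc (M : ℕ) : Finset.Icc 1 M = Finset.Ioc 0 M := by
  ext x; simp [Nat.lt_iff_add_one_le]

lemma sum_divisors_moebius (m : ℕ) :
    (∑ d ∈ m.divisors, ArithmeticFunction.moebius d) = if m = 1 then 1 else 0 := by
  have h : (ArithmeticFunction.moebius * (ArithmeticFunction.zeta : ArithmeticFunction ℤ)) m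
      = (1 : ArithmeticFunction ℤ) m := by
    rw [ArithmeticFunction.moebius_mul_coe_zeta]
  rw [ArithmeticFunction.coe_mul_zeta_apply] at h
  rw [h, ArithmeticFunction.one_apply]

lemma indicator_eq (c n : ℕ) (hn : n ≠ 0) :
    (if Nat.gcd c n = 1 then (1:ℤ) else 0)
      = ∑ d ∈ n.divisors.filter (· ∣ c), ArithmeticFunction.moebius d := by
  have h1 : n.divisors.filter (· ∣ c) = (Nat.gcd c n).divisors := by
    ext d
    simp only [Finset.mem_filter, Nat.mem_divisors, Nat.dvd_gcd_iff]
    constructor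
    · rintro ⟨⟨h2, h3⟩, h4⟩; exact ⟨⟨h4, h2⟩, fun h => hn (Nat.eq_zero_of_gcd_eq_zero_right h)⟩
    · rintro ⟨⟨h2, h3⟩, h4⟩; exact ⟨⟨h3, hn⟩, h2⟩
  rw [h1, sum_divisors_moebius]

lemma Phi_eq (M n : ℕ) (hn : n ≠ 0) :
    (Phi M n : ℤ) = ∑ d ∈ n.divisors, ArithmeticFunction.moebius d * (M / d : ℕ) := by
  have : (Phi M n : ℤ) = ∑ c ∈ Finset.Icc 1 M, (if Nat.gcd c n = 1 then (1:ℤ) else 0) := by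
    rw [Phi, Finset.card_filter]; push_cast; rfl
  rw [this]
  have : ∀ c ∈ Finset.Icc 1 M, (if Nat.gcd c n = 1 then (1:ℤ) else 0)
      = ∑ d ∈ n.divisors, (if d ∣ c then ArithmeticFunction.moebius d else 0) := by
    intro c _
    rw [indicator_eq c n hn, Finset.sum_filter]
  rw [Finset.sum_congr rfl this, Finset.sum_comm]
  refine Finset.sum_congr rfl fun d _ => ?_
  rw [← Finset.sum_filter]
  rw [Finset.sum_const]
  have : ((Finset.Icc 1 M).filter (fun c => d ∣ c)).card = M / d := by
    rw [Icc_one_eq_Ioc]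
    exact Nat.Ioc_filter_dvd_card_eq_div M d
  rw [this, nsmul_eq_mul, mul_comm]

lemma Phi_self (n : ℕ) : Phi n n = Nat.totient n := by
  have h := Nat.filter_coprime_Ico_eq_totient n 1
  rw [Phi]
  rw [← h]
  have : Finset.Ico 1 (1 + n) = Finset.Icc 1 n := by
    ext x; simp; omega
  rw [this]
  congr 1
  apply Finset.filter_congr
  intro x _
  simp [Nat.Coprime, Nat.gcd_comm]

lemma count_mod (q : ℕ) (hq : 0 < q) (s : ℕ) (hs : s < q) : ∀ N : ℕ,
    ((Finset.Icc 1 N).filter (fun n => n % q = s)).card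
      = N / q + (if 1 ≤ s ∧ s ≤ N % q then 1 else 0) := by
  intro N
  induction N with
  | zero =>
    rw [Nat.zero_div, Nat.zero_mod, if_neg (by omega)]
    simp
  | succ N ih =>
    have hins : Finset.Icc 1 (N + 1) = insert (N + 1) (Finset.Icc 1 N) := by
      ext x; simp; omega
    rw [hins, Finset.filter_insert]
    have hnm : (N + 1) ∉ Finset.Icc 1 N := by simp
    have hm := Nat.mod_add_div N q
    have hr : N % q < q := Nat.mod_lt _ hq
    by_cases hcase : N % q + 1 = q
    · have hN1 : N + 1 = q * (N / q + 1) := by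
        rw [Nat.mul_add, Nat.mul_one]; omega
      have hmod : (N + 1) % q = 0 := by rw [hN1, Nat.mul_mod_right]
      have hdiv : (N + 1) / q = N / q + 1 := by rw [hN1, Nat.mul_div_cancel_left _ hq]
      by_cases hsz : s = 0
      · rw [if_pos (by rw [hmod, hsz]), Finset.card_insert_of_notMem (by simp [hnm]), ih,
          hdiv, hmod]
        have h3 : ¬ (1 ≤ s ∧ s ≤ N % q) := by omega
        have h4 : ¬ (1 ≤ s ∧ s ≤ 0) := by omega
        simp [h3, h4]; omega
      · rw [if_neg (by rw [hmod]; omega), ih, hdiv, hmod]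
        have h3 : (1 ≤ s ∧ s ≤ N % q) := by omega
        have h4 : ¬ (1 ≤ s ∧ s ≤ 0) := by omega
        simp [h3, h4, hsz]
    · have hN1 : N + 1 = (N % q + 1) + q * (N / q) := by omega
      have hmod : (N + 1) % q = N % q + 1 := by
        rw [hN1, Nat.add_mul_mod_self_left, Nat.mod_eq_of_lt (by omega)]
      have hdiv : (N + 1) / q = N / q := by
        rw [hN1, Nat.add_mul_div_left _ _ hq, Nat.div_eq_of_lt (by omega)]; omega
      by_cases hsz : (N + 1) % q = s
      · rw [if_pos hsz, Finset.card_insert_of_notMem (by simp [hnm]), ih, hdiv]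
        rw [hmod] at hsz
        have h3 : ¬ (1 ≤ s ∧ s ≤ N % q) := by omega
        have h4 : (1 ≤ s ∧ s ≤ (N+1) % q) := by rw [hmod]; omega
        simp [h3, h4]
        omega
      · rw [if_neg hsz, ih, hdiv]
        rw [hmod] at hsz ⊢
        have : (1 ≤ s ∧ s ≤ N % q) ↔ (1 ≤ s ∧ s ≤ N % q + 1) := by omega
        simp [this]

lemma Phi_mono {M M' : ℕ} (h : M ≤ M') (n : ℕ) : Phi M n ≤ Phi M' n :=
  Finset.card_le_card (Finset.filter_subset_filter _ (Finset.Icc_subset_Icc_right h))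

lemma card_gcd_fiber (r q h : ℕ) (hq : 0 < q) (hh : h ∣ q) :
    ((Finset.Icc 1 r).filter (fun b => Nat.gcd b q = h)).card = Phi (r / h) (q / h) := by
  have hh0 : 0 < h := Nat.pos_of_dvd_of_pos hh hq
  rw [Phi, eq_comm]
  apply Finset.card_bij (fun c _ => h * c)
  · -- maps into
    intro c hc
    simp only [Finset.mem_filter, Finset.mem_Icc] at hc ⊢
    obtain ⟨⟨hc1, hc2⟩, hc3⟩ := hc
    refine ⟨⟨Nat.mul_pos hh0 (by omega), ?_⟩, ?_⟩
    · calc h * c ≤ h * (r / h) := Nat.mul_le_mul_left _ hc2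
        _ ≤ r := Nat.mul_div_le r h
    · -- gcd (h*c) q = h
      obtain ⟨n, rfl⟩ := hh
      rw [Nat.mul_div_cancel_left _ hh0] at hc3
      rw [Nat.gcd_mul_left, hc3, Nat.mul_one]
  · -- injective
    intro a ha b hb hab
    exact Nat.eq_of_mul_eq_mul_left hh0 hab
  · -- surjective
    intro b hb
    simp only [Finset.mem_filter, Finset.mem_Icc] at hb
    obtain ⟨⟨hb1, hb2⟩, hb3⟩ := hb
    have hdvd : h ∣ b := hb3 ▸ Nat.gcd_dvd_left b q
    refine ⟨b / h, ?_, by rw [Nat.mul_div_cancel' hdvd]⟩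
    simp only [Finset.mem_filter, Finset.mem_Icc]
    obtain ⟨c, rfl⟩ := hdvd
    obtain ⟨n, rfl⟩ := hh
    rw [Nat.mul_div_cancel_left _ hh0, Nat.mul_div_cancel_left _ hh0]
    rw [Nat.gcd_mul_left] at hb3
    have hc1 : Nat.gcd c n = 1 := by
      have := Nat.eq_of_mul_eq_mul_left hh0 (hb3.trans (Nat.mul_one h).symm)
      exact this
    have hcpos : 0 < c := Nat.pos_of_ne_zero (by rintro rfl; simp at hb1)
    refine ⟨⟨hcpos, Nat.le_div_iff_mul_le hh0 |>.2 (by rw [Nat.mul_comm]; exact hb2)⟩, hc1⟩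

lemma nat_div_dev (r D : ℕ) (hD : 0 < D) : |((r / D : ℕ) : ℝ) - (r : ℝ) / D| ≤ 1 := by
  have h1 : ((r / D : ℕ) : ℝ) ≤ (r : ℝ) / D := Nat.cast_div_le
  have h2 : (r : ℝ) / D < ((r / D : ℕ) : ℝ) + 1 := by
    rw [div_lt_iff₀ (by positivity)]
    have h3 : (D : ℝ) * ((r / D : ℕ) : ℝ) + ((r % D : ℕ) : ℝ) = (r : ℝ) := by
      exact_mod_cast Nat.div_add_mod r D
    have h4 : ((r % D : ℕ) : ℝ) < (D : ℝ) := by exact_mod_cast Nat.mod_lt _ hD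
    nlinarith
  rw [abs_le]; constructor <;> linarith

lemma moebius_dev (r h n : ℕ) (hh : 0 < h) (hn : 0 < n) :
    |(Phi (r / h) n : ℝ) - (r : ℝ) * (Nat.totient n) / ((h : ℝ) * n)| ≤ (n.divisors.card : ℝ) := by
  have hPhi : (Phi (r / h) n : ℝ)
      = ∑ d ∈ n.divisors, (ArithmeticFunction.moebius d : ℝ) * ((r / (h * d) : ℕ) : ℝ) := by
    have h2 : ∀ d ∈ n.divisors, (r / h) / d = r / (h * d) := fun d _ => Nat.div_div_eq_div_mul r h d
    have this' : (Phi (r / h) n : ℤ)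
        = ∑ d ∈ n.divisors, ArithmeticFunction.moebius d * (r / (h * d) : ℕ) :=
      (Phi_eq (r / h) n hn.ne').trans (Finset.sum_congr rfl fun d hd => by rw [h2 d hd])
    have h3 := congrArg (fun z : ℤ => (z : ℝ)) this'
    push_cast at h3
    exact h3
  have htot : (r : ℝ) * (Nat.totient n) / ((h : ℝ) * n)
      = ∑ d ∈ n.divisors, (ArithmeticFunction.moebius d : ℝ) * ((r : ℝ) / ((h : ℝ) * d)) := by
    have := Phi_eq n n hn.ne'
    rw [Phi_self] at this
    have htot2 : (Nat.totient n : ℝ) = ∑ d ∈ n.divisors, (ArithmeticFunction.moebius d : ℝ) * ((n / d : ℕ) : ℝ) := by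
      calc (Nat.totient n : ℝ) = ((Nat.totient n : ℤ) : ℝ) := by push_cast; ring
        _ = _ := by
          have h3 := congrArg (fun z : ℤ => (z : ℝ)) this
          push_cast at h3
          exact h3
    rw [htot2, Finset.mul_sum, Finset.sum_div]
    refine Finset.sum_congr rfl fun d hd => ?_
    obtain ⟨hdvd, -⟩ := Nat.mem_divisors.mp hd
    have hd0 : (d : ℝ) ≠ 0 := by
      exact_mod_cast (Nat.pos_of_mem_divisors hd).ne'
    have hcast : ((n / d : ℕ) : ℝ) = (n : ℝ) / d := Nat.cast_div hdvd hd0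
    rw [hcast]
    have hn0 : (n : ℝ) ≠ 0 := by exact_mod_cast hn.ne'
    have hh0 : (h : ℝ) ≠ 0 := by exact_mod_cast hh.ne'
    field_simp
  rw [hPhi, htot, ← Finset.sum_sub_distrib]
  calc |∑ d ∈ n.divisors, ((ArithmeticFunction.moebius d : ℝ) * ((r / (h * d) : ℕ) : ℝ)
        - (ArithmeticFunction.moebius d : ℝ) * ((r : ℝ) / ((h : ℝ) * d)))|
      ≤ ∑ d ∈ n.divisors, |(ArithmeticFunction.moebius d : ℝ) * ((r / (h * d) : ℕ) : ℝ)
        - (ArithmeticFunction.moebius d : ℝ) * ((r : ℝ) / ((h : ℝ) * d))| := Finset.abs_sum_le_sum_abs _ _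
    _ ≤ ∑ d ∈ n.divisors, 1 := by
        refine Finset.sum_le_sum fun d hd => ?_
        have hd0 : 0 < d := Nat.pos_of_mem_divisors hd
        rw [← mul_sub, abs_mul]
        have hmu : |(ArithmeticFunction.moebius d : ℝ)| ≤ 1 := by
          have := ArithmeticFunction.abs_moebius_le_one (n := d)
          calc |(ArithmeticFunction.moebius d : ℝ)| = (|ArithmeticFunction.moebius d| : ℤ) := by
                push_cast; rfl
            _ ≤ 1 := by exact_mod_cast this
        have hdev := nat_div_dev r (h * d) (Nat.mul_pos hh hd0)
        have : ((h * d : ℕ) : ℝ) = (h : ℝ) * d := by push_cast; ring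
        rw [this] at hdev
        calc |(ArithmeticFunction.moebius d : ℝ)| * |((r / (h * d) : ℕ) : ℝ) - (r : ℝ) / ((h:ℝ) * d)|
            ≤ 1 * 1 := by
              apply mul_le_mul hmu hdev (abs_nonneg _) (by norm_num)
          _ = 1 := by norm_num
    _ = (n.divisors.card : ℝ) := by rw [Finset.sum_const, nsmul_eq_mul, mul_one]

lemma seqSum_one (x : ℝ) (q b : ℕ) (hq : 0 < q) (hb1 : 1 ≤ b) (hb2 : b ≤ q) :
    seqSum (fun _ => 1) x q b
      = ((⌊x⌋₊ / q : ℕ) : ℝ) + (if b ≤ ⌊x⌋₊ % q then 1 else 0) := by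
  set N := ⌊x⌋₊
  have hcard : seqSum (fun _ => 1) x q b
      = (((Finset.Icc 1 N).filter (fun n => n % q = b % q)).card : ℝ) := by
    rw [seqSum, Finset.sum_const, nsmul_eq_mul, mul_one]
  rw [hcard, count_mod q hq (b % q) (Nat.mod_lt _ hq) N]
  have hcond : (1 ≤ b % q ∧ b % q ≤ N % q) ↔ b ≤ N % q := by
    rcases eq_or_lt_of_le hb2 with h | h
    · subst h
      rw [Nat.mod_self]
      have : N % b < b := Nat.mod_lt _ hq
      omega
    · rw [Nat.mod_eq_of_lt h]
      omega
  rw [if_congr hcond rfl rfl]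
  push_cast
  split_ifs <;> norm_num

lemma per_q (x : ℝ) (q : ℕ) (hq : 0 < q) :
    |∑ b ∈ Finset.Icc 1 q, (seqSum (fun _ => 1) x q b - seqAver (fun _ => 1) x q (Nat.gcd b q)) ^ 2
        - (((⌊x⌋₊ % q : ℕ) : ℝ) - ((⌊x⌋₊ % q : ℕ) : ℝ) ^ 2 / q)|
      ≤ 2 * ∑ e ∈ q.divisors, (e.divisors.card : ℝ) := by
  set N := ⌊x⌋₊ with hN
  set r := N % q with hrdef
  have hrq : r ≤ q := le_of_lt (Nat.mod_lt _ hq)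
  -- fiber data
  set T : ℕ → Finset ℕ := fun h => (Finset.Icc 1 q).filter (fun b => Nat.gcd b q = h) with hT
  set k : ℕ → ℕ := fun h => ((Finset.Icc 1 r).filter (fun b => Nat.gcd b q = h)).card with hk
  have hmaps : ∀ r' ≤ q, ∀ b ∈ Finset.Icc 1 r', Nat.gcd b q ∈ q.divisors := by
    intro r' _ b hb
    rw [Nat.mem_divisors]
    exact ⟨Nat.gcd_dvd_right b q, hq.ne'⟩
  -- class cardinality
  have hTcard : ∀ h ∈ q.divisors, (T h).card = Nat.totient (q / h) := by
    intro h hh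
    rw [hT]
    rw [card_gcd_fiber q q h hq (Nat.mem_divisors.mp hh).1]
    exact Phi_self _
  -- totient positivity
  have hphipos : ∀ h ∈ q.divisors, (0:ℝ) < (Nat.totient (q / h) : ℝ) := by
    intro h hh
    have h1 : 0 < q / h := Nat.div_pos (Nat.le_of_dvd hq (Nat.mem_divisors.mp hh).1)
      (Nat.pos_of_dvd_of_pos (Nat.mem_divisors.mp hh).1 hq)
    exact_mod_cast Nat.totient_pos.mpr h1
  -- epsilon sum over fiber
  have hepsum : ∀ h ∈ q.divisors,
      (∑ b ∈ T h, (if b ≤ r then (1:ℝ) else 0)) = (k h : ℝ) := by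
    intro h hh
    rw [← Finset.sum_filter, Finset.sum_const, nsmul_eq_mul, mul_one, hT, hk]
    congr 2
    ext b
    simp only [Finset.mem_filter, Finset.mem_Icc]
    constructor
    · rintro ⟨⟨⟨h1, h2⟩, h3⟩, h4⟩; exact ⟨⟨h1, h4⟩, h3⟩
    · rintro ⟨⟨h1, h4⟩, h3⟩; exact ⟨⟨⟨h1, le_trans h4 hrq⟩, h3⟩, h4⟩
  -- seqSum on fiber
  have hseq : ∀ h ∈ q.divisors, ∀ b ∈ T h,
      seqSum (fun _ => 1) x q b = ((N / q : ℕ) : ℝ) + (if b ≤ r then (1:ℝ) else 0) := by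
    intro h hh b hb
    rw [hT] at hb
    simp only [Finset.mem_filter, Finset.mem_Icc] at hb
    exact seqSum_one x q b hq hb.1.1 hb.1.2
  -- average on fiber
  have haver : ∀ h ∈ q.divisors,
      seqAver (fun _ => 1) x q h = ((N / q : ℕ) : ℝ) + (k h : ℝ) / (Nat.totient (q / h) : ℝ) := by
    intro h hh
    rw [seqAver]
    have : ∑ b ∈ T h, seqSum (fun _ => 1) x q b
        = (T h).card * ((N / q : ℕ) : ℝ) + (k h : ℝ) := by
      rw [Finset.sum_congr rfl (hseq h hh), Finset.sum_add_distrib, Finset.sum_const,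
        nsmul_eq_mul, hepsum h hh]
    have hTh : (Finset.Icc 1 q).filter (fun b => Nat.gcd b q = h) = T h := rfl
    rw [hTh, this, hTcard h hh]
    have := hphipos h hh
    field_simp
  -- fiber sum of squares
  have hfiber : ∀ h ∈ q.divisors,
      ∑ b ∈ T h, (seqSum (fun _ => 1) x q b - seqAver (fun _ => 1) x q h) ^ 2
        = (k h : ℝ) - (k h : ℝ)^2 / (Nat.totient (q / h) : ℝ) := by
    intro h hh
    set c : ℝ := (k h : ℝ) / (Nat.totient (q / h) : ℝ) with hc
    have hterm : ∀ b ∈ T h,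
        (seqSum (fun _ => 1) x q b - seqAver (fun _ => 1) x q h) ^ 2
          = (if b ≤ r then (1:ℝ) else 0) - 2 * c * (if b ≤ r then (1:ℝ) else 0) + c ^ 2 := by
      intro b hb
      rw [hseq h hh b hb, haver h hh, ← hc]
      split_ifs <;> ring
    rw [Finset.sum_congr rfl hterm, Finset.sum_add_distrib, Finset.sum_sub_distrib,
      Finset.sum_const, nsmul_eq_mul, hepsum h hh, ← Finset.mul_sum, hepsum h hh, hTcard h hh]
    rw [hc]
    have := hphipos h hh
    field_simp
    ring
  -- decompose the full sum into fibers
  have hsplit : ∑ b ∈ Finset.Icc 1 q,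
      (seqSum (fun _ => 1) x q b - seqAver (fun _ => 1) x q (Nat.gcd b q)) ^ 2
      = ∑ h ∈ q.divisors, ((k h : ℝ) - (k h : ℝ)^2 / (Nat.totient (q / h) : ℝ)) := by
    rw [← Finset.sum_fiberwise_of_maps_to (hmaps q le_rfl)
      (fun b => (seqSum (fun _ => 1) x q b - seqAver (fun _ => 1) x q (Nat.gcd b q)) ^ 2)]
    refine Finset.sum_congr rfl fun h hh => ?_
    rw [← hfiber h hh]
    refine Finset.sum_congr rfl fun b hb => ?_
    rw [hT] at hb
    simp only [Finset.mem_filter] at hb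
    rw [hb.2]
  -- sum of k over fibers is r
  have hksum : ∑ h ∈ q.divisors, (k h : ℝ) = (r : ℝ) := by
    have : ∑ h ∈ q.divisors, ∑ b ∈ (Finset.Icc 1 r).filter (fun b => Nat.gcd b q = h), (1:ℝ)
        = ∑ b ∈ Finset.Icc 1 r, (1:ℝ) :=
      Finset.sum_fiberwise_of_maps_to (hmaps r hrq) _
    simp only [Finset.sum_const, nsmul_eq_mul, mul_one] at this
    rw [hk]
    simp only at this ⊢
    rw [this, Nat.card_Icc]
    simp
  -- sum of totients is q
  have hphisum : ∑ h ∈ q.divisors, ((Nat.totient (q / h) : ℝ)) = (q : ℝ) := by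
    have h1 : ∑ h ∈ q.divisors, Nat.totient (q / h) = ∑ h ∈ q.divisors, Nat.totient h :=
      Nat.sum_div_divisors q Nat.totient
    have h2 := Nat.sum_totient q
    have : ∑ h ∈ q.divisors, Nat.totient (q / h) = q := by rw [h1]; exact h2
    exact_mod_cast this
  -- per-fiber deviation bound
  have hdev : ∀ h ∈ q.divisors,
      |(r : ℝ)^2 / (q:ℝ)^2 * (Nat.totient (q / h) : ℝ)
        - (k h : ℝ)^2 / (Nat.totient (q / h) : ℝ)|
        ≤ 2 * ((q / h).divisors.card : ℝ) := by
    intro h hh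
    obtain ⟨hdvd, -⟩ := Nat.mem_divisors.mp hh
    have hh0 : 0 < h := Nat.pos_of_dvd_of_pos hdvd hq
    have hn0 : 0 < q / h := Nat.div_pos (Nat.le_of_dvd hq hdvd) hh0
    set n := q / h with hn
    set φh : ℝ := (Nat.totient n : ℝ) with hφ
    have hφpos : (0:ℝ) < φh := hphipos h hh
    have hkPhi : (k h : ℝ) = (Phi (r / h) n : ℝ) := by
      rw [hk]; simp only; rw [card_gcd_fiber r q h hq hdvd]
    have hqhn : (q : ℝ) = (h : ℝ) * n := by
      have : q = h * n := by rw [hn, Nat.mul_div_cancel' hdvd]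
      exact_mod_cast this
    have hdev1 : |(k h : ℝ) - (r : ℝ) * φh / q| ≤ (n.divisors.card : ℝ) := by
      rw [hkPhi, hqhn]
      exact moebius_dev r h n hh0 hn0
    have hkle : (k h : ℝ) ≤ φh := by
      rw [hkPhi, hφ, ← Phi_self n]
      have : Phi (r / h) n ≤ Phi n n :=
        Phi_mono (by rw [hn]; exact Nat.div_le_div_right hrq) n
      exact_mod_cast this
    have hknn : (0:ℝ) ≤ (k h : ℝ) := Nat.cast_nonneg _
    have hrφq : (0:ℝ) ≤ (r : ℝ) * φh / q ∧ (r : ℝ) * φh / q ≤ φh := by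
      constructor
      · positivity
      · rw [div_le_iff₀ (by exact_mod_cast hq)]
        have : (r:ℝ) ≤ q := by exact_mod_cast hrq
        nlinarith
    -- |a² / φ − k²/φ| where a = rφ/q ; note a²/φ = r²/q² · φ
    have hkey : (r : ℝ)^2 / (q:ℝ)^2 * φh = ((r : ℝ) * φh / q)^2 / φh := by
      field_simp
    rw [hkey]
    set a : ℝ := (r : ℝ) * φh / q with ha
    have : a^2 / φh - (k h : ℝ)^2 / φh = (a - (k h : ℝ)) * ((a + (k h : ℝ)) / φh) := by
      field_simp; ring
    rw [this, abs_mul]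
    have h5 : |(a + (k h : ℝ)) / φh| ≤ 2 := by
      rw [abs_of_nonneg (by positivity), div_le_iff₀ hφpos]
      nlinarith [hrφq.1, hrφq.2, hkle, hknn]
    have h6 : |a - (k h : ℝ)| ≤ (n.divisors.card : ℝ) := by
      rw [abs_sub_comm]; exact hdev1
    calc |a - (k h : ℝ)| * |(a + (k h : ℝ)) / φh|
        ≤ (n.divisors.card : ℝ) * 2 :=
          mul_le_mul h6 h5 (abs_nonneg _) (Nat.cast_nonneg _)
      _ = 2 * ((q/h).divisors.card : ℝ) := by rw [hn]; ring
  -- put everything together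
  rw [hsplit]
  have hr2q : ((r:ℝ) - (r:ℝ)^2/q)
      = ∑ h ∈ q.divisors, ((k h : ℝ) - (r : ℝ)^2 / (q:ℝ)^2 * (Nat.totient (q / h) : ℝ)) := by
    rw [Finset.sum_sub_distrib, hksum, ← Finset.mul_sum, hphisum]
    have hq0 : (q : ℝ) ≠ 0 := by exact_mod_cast hq.ne'
    field_simp
  rw [hr2q, ← Finset.sum_sub_distrib]
  have : ∀ h ∈ q.divisors,
      ((k h : ℝ) - (k h : ℝ)^2 / (Nat.totient (q / h) : ℝ))
        - ((k h : ℝ) - (r : ℝ)^2 / (q:ℝ)^2 * (Nat.totient (q / h) : ℝ))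
      = (r : ℝ)^2 / (q:ℝ)^2 * (Nat.totient (q / h) : ℝ) - (k h : ℝ)^2 / (Nat.totient (q / h) : ℝ) := by
    intro h hh; ring
  rw [Finset.sum_congr rfl this]
  calc |∑ h ∈ q.divisors, ((r : ℝ)^2 / (q:ℝ)^2 * (Nat.totient (q / h) : ℝ)
          - (k h : ℝ)^2 / (Nat.totient (q / h) : ℝ))|
      ≤ ∑ h ∈ q.divisors, |(r : ℝ)^2 / (q:ℝ)^2 * (Nat.totient (q / h) : ℝ)
          - (k h : ℝ)^2 / (Nat.totient (q / h) : ℝ)| := Finset.abs_sum_le_sum_abs _ _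
    _ ≤ ∑ h ∈ q.divisors, 2 * ((q / h).divisors.card : ℝ) := Finset.sum_le_sum hdev
    _ = 2 * ∑ e ∈ q.divisors, (e.divisors.card : ℝ) := by
        rw [← Finset.mul_sum]
        congr 1
        exact Nat.sum_div_divisors q (fun e => ((e.divisors.card : ℝ)))

lemma fract_close (x : ℝ) (hx : 1 ≤ x) (q : ℕ) (hq : 0 < q) :
    |(q : ℝ) * Int.fract (x / q) * (1 - Int.fract (x / q))
      - (((⌊x⌋₊ % q : ℕ) : ℝ) - ((⌊x⌋₊ % q : ℕ) : ℝ) ^ 2 / q)| ≤ 1 := by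
  set N := ⌊x⌋₊ with hN
  set r := N % q with hr
  set θ : ℝ := x - N with hθ
  have hx0 : (0:ℝ) ≤ x := by linarith
  have hθ0 : 0 ≤ θ := by
    rw [hθ]; have := Nat.floor_le hx0; linarith
  have hθ1 : θ < 1 := by
    rw [hθ]; have := Nat.lt_floor_add_one x; linarith
  have hrq : r < q := Nat.mod_lt _ hq
  have hqR : (0:ℝ) < q := by exact_mod_cast hq
  set m := N / q with hm
  have hNdecomp : (N : ℝ) = (q : ℝ) * (m : ℝ) + (r : ℝ) := by
    exact_mod_cast (Nat.div_add_mod N q).symm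
  have hrq' : (r : ℝ) + 1 ≤ (q : ℝ) := by exact_mod_cast hrq
  have hfr : Int.fract (x / q) = ((r : ℝ) + θ) / q := by
    have hfloor : ⌊x / q⌋ = (m : ℤ) := by
      rw [Int.floor_eq_iff]
      constructor
      · push_cast
        rw [le_div_iff₀ hqR]
        nlinarith [hNdecomp, Nat.cast_nonneg (α := ℝ) r]
      · push_cast
        rw [div_lt_iff₀ hqR]
        nlinarith [hNdecomp]
    rw [Int.fract, hfloor]
    push_cast
    field_simp
    linarith [hNdecomp, hθ]
  rw [hfr]
  have hkey : (q : ℝ) * (((r : ℝ) + θ) / q) * (1 - ((r : ℝ) + θ) / q)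
      - ((r : ℝ) - (r : ℝ) ^ 2 / q) = θ * ((q : ℝ) - 2 * r - θ) / q := by
    field_simp
    ring
  rw [hkey, abs_div, abs_of_pos hqR, div_le_one hqR, abs_mul]
  have h1 : |θ| ≤ 1 := by rw [abs_of_nonneg hθ0]; linarith
  have h2 : |(q : ℝ) - 2 * r - θ| ≤ q := by
    rw [abs_le]
    have hr0 : (0:ℝ) ≤ (r:ℝ) := Nat.cast_nonneg r
    constructor <;> nlinarith
  calc |θ| * |(q : ℝ) - 2 * r - θ| ≤ 1 * (q : ℝ) :=
        mul_le_mul h1 h2 (abs_nonneg _) (by norm_num)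
    _ = q := by ring

lemma swap_divisors (M : ℕ) (g : ℕ → ℝ) :
    ∑ q ∈ Finset.Icc 1 M, ∑ e ∈ q.divisors, g e
      = ∑ e ∈ Finset.Icc 1 M, ((M / e : ℕ) : ℝ) * g e := by
  have step1 : ∀ q ∈ Finset.Icc 1 M, ∑ e ∈ q.divisors, g e
      = ∑ e ∈ Finset.Icc 1 M, (if e ∣ q then g e else 0) := by
    intro q hq
    rw [Finset.mem_Icc] at hq
    rw [← Finset.sum_filter]
    congr 1
    ext e
    simp only [Nat.mem_divisors, Finset.mem_filter, Finset.mem_Icc]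
    constructor
    · rintro ⟨h1, h2⟩
      exact ⟨⟨Nat.pos_of_dvd_of_pos h1 (by omega), le_trans (Nat.le_of_dvd (by omega) h1) hq.2⟩, h1⟩
    · rintro ⟨-, h1⟩
      exact ⟨h1, by omega⟩
  rw [Finset.sum_congr rfl step1, Finset.sum_comm]
  refine Finset.sum_congr rfl fun e he => ?_
  rw [← Finset.sum_filter, Finset.sum_const, nsmul_eq_mul]
  congr 2
  have : Finset.Icc 1 M = Finset.Ioc 0 M := by ext z; simp [Nat.lt_iff_add_one_le]
  rw [this]
  exact Nat.Ioc_filter_dvd_card_eq_div M e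

lemma tau_over_e (M : ℕ) :
    ∑ e ∈ Finset.Icc 1 M, ((e.divisors.card : ℝ) / e)
      ≤ (∑ i ∈ Finset.Icc 1 M, (1 : ℝ) / i) ^ 2 := by
  have step1 : ∀ e ∈ Finset.Icc 1 M, ((e.divisors.card : ℝ) / e)
      = ∑ p ∈ e.divisorsAntidiagonal, (1:ℝ) / (p.1 * p.2) := by
    intro e he
    rw [Finset.mem_Icc] at he
    have : ∀ p ∈ e.divisorsAntidiagonal, (1:ℝ) / (p.1 * p.2) = 1 / e := by
      intro p hp
      obtain ⟨h1, -⟩ := Nat.mem_divisorsAntidiagonal.mp hp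
      rw [← h1]; push_cast; ring_nf
    have hcardA : e.divisorsAntidiagonal.card = e.divisors.card := by
      rw [← Nat.map_div_right_divisors, Finset.card_map]
    rw [Finset.sum_congr rfl this, Finset.sum_const, nsmul_eq_mul, hcardA]
    ring
  rw [Finset.sum_congr rfl step1]
  have hdisj : ((Finset.Icc 1 M : Finset ℕ) : Set ℕ).PairwiseDisjoint
      (fun e => Nat.divisorsAntidiagonal e) := by
    intro a _ b _ hab
    refine Finset.disjoint_left.mpr fun p hpa hpb => ?_
    obtain ⟨ha, -⟩ := Nat.mem_divisorsAntidiagonal.mp hpa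
    obtain ⟨hb, -⟩ := Nat.mem_divisorsAntidiagonal.mp hpb
    exact hab (ha.symm.trans hb)
  rw [← Finset.sum_biUnion hdisj]
  have hsub : (Finset.Icc 1 M).biUnion (fun e => Nat.divisorsAntidiagonal e)
      ⊆ (Finset.Icc 1 M) ×ˢ (Finset.Icc 1 M) := by
    intro p hp
    rw [Finset.mem_biUnion] at hp
    obtain ⟨e, he, hpe⟩ := hp
    rw [Finset.mem_Icc] at he
    obtain ⟨h1, h2⟩ := Nat.mem_divisorsAntidiagonal.mp hpe
    rw [Finset.mem_product, Finset.mem_Icc, Finset.mem_Icc]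
    have hp1 : p.1 ∣ e := Dvd.intro _ h1
    have hp2 : p.2 ∣ e := Dvd.intro_left _ h1
    have he0 : 0 < e := by omega
    exact ⟨⟨Nat.pos_of_dvd_of_pos hp1 he0, le_trans (Nat.le_of_dvd he0 hp1) he.2⟩,
      ⟨Nat.pos_of_dvd_of_pos hp2 he0, le_trans (Nat.le_of_dvd he0 hp2) he.2⟩⟩
  calc ∑ p ∈ (Finset.Icc 1 M).biUnion (fun e => Nat.divisorsAntidiagonal e), (1:ℝ) / (p.1 * p.2)
      ≤ ∑ p ∈ (Finset.Icc 1 M) ×ˢ (Finset.Icc 1 M), (1:ℝ) / (p.1 * p.2) :=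
        Finset.sum_le_sum_of_subset_of_nonneg hsub (fun p _ _ => by positivity)
    _ = (∑ i ∈ Finset.Icc 1 M, (1 : ℝ) / i) ^ 2 := by
        rw [Finset.sum_product, sq]
        rw [Finset.sum_mul_sum]
        refine Finset.sum_congr rfl fun a _ => Finset.sum_congr rfl fun b _ => ?_
        push_cast
        rw [div_mul_div_comm, one_mul]

lemma total_divisor_bound (M : ℕ) (hM : 1 ≤ M) :
    ∑ q ∈ Finset.Icc 1 M, (2 * (∑ e ∈ q.divisors, (e.divisors.card : ℝ)) + 1)
      ≤ 3 * M * (∑ i ∈ Finset.Icc 1 M, (1 : ℝ) / i) ^ 2 := by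
  set H : ℝ := ∑ i ∈ Finset.Icc 1 M, (1 : ℝ) / i with hH
  have hH1 : 1 ≤ H := by
    have hsub : ({1} : Finset ℕ) ⊆ Finset.Icc 1 M := by simp [hM]
    have h2 := Finset.sum_le_sum_of_subset_of_nonneg hsub
      (f := fun i : ℕ => (1:ℝ)/i) (fun i _ _ => by positivity)
    rw [hH]
    simpa [one_div] using h2
  have hswap := swap_divisors M (fun e => (e.divisors.card : ℝ))
  rw [Finset.sum_add_distrib, ← Finset.mul_sum, hswap, Finset.sum_const, nsmul_eq_mul, mul_one,
    Nat.card_Icc]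
  have hmain : ∑ e ∈ Finset.Icc 1 M, ((M / e : ℕ) : ℝ) * (e.divisors.card : ℝ)
      ≤ M * H ^ 2 := by
    have step : ∀ e ∈ Finset.Icc 1 M, ((M / e : ℕ) : ℝ) * (e.divisors.card : ℝ)
        ≤ (M : ℝ) * ((e.divisors.card : ℝ) / e) := by
      intro e he
      rw [Finset.mem_Icc] at he
      have he0 : (0:ℝ) < e := by exact_mod_cast he.1
      have h1 : ((M / e : ℕ) : ℝ) ≤ (M : ℝ) / e := Nat.cast_div_le
      calc ((M / e : ℕ) : ℝ) * (e.divisors.card : ℝ)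
          ≤ ((M : ℝ) / e) * (e.divisors.card : ℝ) :=
            mul_le_mul_of_nonneg_right h1 (Nat.cast_nonneg _)
        _ = (M : ℝ) * ((e.divisors.card : ℝ) / e) := by ring
    calc ∑ e ∈ Finset.Icc 1 M, ((M / e : ℕ) : ℝ) * (e.divisors.card : ℝ)
        ≤ ∑ e ∈ Finset.Icc 1 M, (M : ℝ) * ((e.divisors.card : ℝ) / e) :=
          Finset.sum_le_sum step
      _ = (M : ℝ) * ∑ e ∈ Finset.Icc 1 M, ((e.divisors.card : ℝ) / e) := by
          rw [Finset.mul_sum]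
      _ ≤ (M : ℝ) * H ^ 2 := by
          apply mul_le_mul_of_nonneg_left (tau_over_e M) (Nat.cast_nonneg _)
  have hcard : ((M + 1 - 1 : ℕ) : ℝ) = (M : ℝ) := by push_cast; ring
  rw [hcard]
  have hM1 : (1:ℝ) ≤ (M:ℝ) := (Nat.one_le_cast (α := ℝ)).mpr hM
  have hMH : (M:ℝ) ≤ (M:ℝ) * H ^ 2 := by nlinarith [sq_nonneg H, sq_nonneg (H - 1)]
  linarith [hmain, hMH]

lemma harmonic_Icc (M : ℕ) : ∑ i ∈ Finset.Icc 1 M, (1 : ℝ) / i ≤ 1 + Real.log M := by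
  have h1 : (harmonic M : ℝ) = ∑ i ∈ Finset.Icc 1 M, (1 : ℝ) / i := by
    rw [harmonic_eq_sum_Icc]
    push_cast
    simp [one_div]
  rw [← h1]
  exact harmonic_le_one_add_log M

end St14


/-- An intermediate step in the proof of Lemma 3: for all large `Q` and `x`,
`V(ℕ,x,Q) = Σ_{Q/2 < q ≤ Q} q {x/q}(1 − {x/q}) + O(Q log² Q)`, where `{·}` is the
fractional part and the implied constant is absolute. -/
theorem statement_14 :
    ∃ C : ℝ, 0 < C ∧ ∀ x Q : ℝ, C ≤ x → C ≤ Q →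
      |varV (fun _ => 1) x Q -
          ∑ q ∈ Finset.Ioc ⌊Q / 2⌋₊ ⌊Q⌋₊,
            (q : ℝ) * Int.fract (x / q) * (1 - Int.fract (x / q))|
        ≤ C * (Q * (Real.log Q) ^ 2) := by
  refine ⟨12, by norm_num, fun x Q hx hQ => ?_⟩
  set M := ⌊Q⌋₊ with hM
  have hQ0 : (0:ℝ) < Q := by linarith
  have hM12 : 12 ≤ M := Nat.le_floor (by exact_mod_cast hQ)
  have hM1 : 1 ≤ M := by omega
  have hx1 : (1:ℝ) ≤ x := by linarith
  -- termwise bound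
  have hterm : ∀ q ∈ Finset.Ioc ⌊Q / 2⌋₊ M,
      |∑ b ∈ Finset.Icc 1 q,
          (seqSum (fun _ => 1) x q b - seqAver (fun _ => 1) x q (Nat.gcd b q)) ^ 2
        - (q : ℝ) * Int.fract (x / q) * (1 - Int.fract (x / q))|
      ≤ 2 * (∑ e ∈ q.divisors, (e.divisors.card : ℝ)) + 1 := by
    intro q hq
    rw [Finset.mem_Ioc] at hq
    have hq0 : 0 < q := by omega
    have h1 := St14.per_q x q hq0
    have h2 := St14.fract_close x hx1 q hq0
    calc |∑ b ∈ Finset.Icc 1 q,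
          (seqSum (fun _ => 1) x q b - seqAver (fun _ => 1) x q (Nat.gcd b q)) ^ 2
        - (q : ℝ) * Int.fract (x / q) * (1 - Int.fract (x / q))|
        ≤ |∑ b ∈ Finset.Icc 1 q,
            (seqSum (fun _ => 1) x q b - seqAver (fun _ => 1) x q (Nat.gcd b q)) ^ 2
          - (((⌊x⌋₊ % q : ℕ) : ℝ) - ((⌊x⌋₊ % q : ℕ) : ℝ) ^ 2 / q)|
          + |(q : ℝ) * Int.fract (x / q) * (1 - Int.fract (x / q))
          - (((⌊x⌋₊ % q : ℕ) : ℝ) - ((⌊x⌋₊ % q : ℕ) : ℝ) ^ 2 / q)| := by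
            rw [show ∑ b ∈ Finset.Icc 1 q,
              (seqSum (fun _ => 1) x q b - seqAver (fun _ => 1) x q (Nat.gcd b q)) ^ 2
              - (q : ℝ) * Int.fract (x / q) * (1 - Int.fract (x / q))
              = (∑ b ∈ Finset.Icc 1 q,
                  (seqSum (fun _ => 1) x q b - seqAver (fun _ => 1) x q (Nat.gcd b q)) ^ 2
                - (((⌊x⌋₊ % q : ℕ) : ℝ) - ((⌊x⌋₊ % q : ℕ) : ℝ) ^ 2 / q))
                - ((q : ℝ) * Int.fract (x / q) * (1 - Int.fract (x / q))
                - (((⌊x⌋₊ % q : ℕ) : ℝ) - ((⌊x⌋₊ % q : ℕ) : ℝ) ^ 2 / q)) from by ring]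
            exact abs_sub _ _
      _ ≤ 2 * (∑ e ∈ q.divisors, (e.divisors.card : ℝ)) + 1 := by linarith
  -- sum the bounds
  have hsum1 : |varV (fun _ => 1) x Q -
      ∑ q ∈ Finset.Ioc ⌊Q / 2⌋₊ M, (q : ℝ) * Int.fract (x / q) * (1 - Int.fract (x / q))|
      ≤ ∑ q ∈ Finset.Ioc ⌊Q / 2⌋₊ M,
        (2 * (∑ e ∈ q.divisors, (e.divisors.card : ℝ)) + 1) := by
    rw [varV, ← Finset.sum_sub_distrib]
    calc |∑ q ∈ Finset.Ioc ⌊Q / 2⌋₊ M, (∑ b ∈ Finset.Icc 1 q,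
          (seqSum (fun _ => 1) x q b - seqAver (fun _ => 1) x q (Nat.gcd b q)) ^ 2
          - (q : ℝ) * Int.fract (x / q) * (1 - Int.fract (x / q)))|
        ≤ ∑ q ∈ Finset.Ioc ⌊Q / 2⌋₊ M, |∑ b ∈ Finset.Icc 1 q,
          (seqSum (fun _ => 1) x q b - seqAver (fun _ => 1) x q (Nat.gcd b q)) ^ 2
          - (q : ℝ) * Int.fract (x / q) * (1 - Int.fract (x / q))| :=
          Finset.abs_sum_le_sum_abs _ _
      _ ≤ _ := Finset.sum_le_sum hterm
  have hsum2 : ∑ q ∈ Finset.Ioc ⌊Q / 2⌋₊ M,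
        (2 * (∑ e ∈ q.divisors, (e.divisors.card : ℝ)) + 1)
      ≤ ∑ q ∈ Finset.Icc 1 M, (2 * (∑ e ∈ q.divisors, (e.divisors.card : ℝ)) + 1) := by
    apply Finset.sum_le_sum_of_subset_of_nonneg
    · intro q hq
      rw [Finset.mem_Ioc] at hq
      rw [Finset.mem_Icc]
      omega
    · intro q _ _
      have : (0:ℝ) ≤ ∑ e ∈ q.divisors, (e.divisors.card : ℝ) :=
        Finset.sum_nonneg fun e _ => Nat.cast_nonneg _
      linarith
  have hsum3 := St14.total_divisor_bound M hM1
  -- logarithmic bounds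
  set H : ℝ := ∑ i ∈ Finset.Icc 1 M, (1 : ℝ) / i with hH
  have hH0 : 0 ≤ H := Finset.sum_nonneg fun i _ => by positivity
  have hMQ : (M : ℝ) ≤ Q := Nat.floor_le hQ0.le
  have hM0 : (0:ℝ) < M := by exact_mod_cast hM1
  have hlogM : Real.log M ≤ Real.log Q := Real.log_le_log hM0 hMQ
  have hlogQ1 : 1 ≤ Real.log Q := by
    rw [Real.le_log_iff_exp_le hQ0]
    have := Real.exp_one_lt_d9
    linarith
  have hHle : H ≤ 2 * Real.log Q := by
    have := St14.harmonic_Icc M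
    rw [← hH] at this
    linarith
  have hfinal : 3 * (M : ℝ) * H ^ 2 ≤ 12 * (Q * (Real.log Q) ^ 2) := by
    have e0 : H ^ 2 ≤ (2 * Real.log Q) ^ 2 := by nlinarith [hH0, hHle]
    have e1 : 3 * (M : ℝ) * H ^ 2 ≤ 3 * Q * H ^ 2 := by nlinarith [sq_nonneg H]
    have e2 : 3 * Q * H ^ 2 ≤ 3 * Q * (2 * Real.log Q) ^ 2 := by
      have := mul_le_mul_of_nonneg_left e0 (by linarith : (0:ℝ) ≤ 3 * Q)
      linarith
    have e3 : 3 * Q * (2 * Real.log Q) ^ 2 = 12 * (Q * (Real.log Q) ^ 2) := by ring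
    linarith
  calc |varV (fun _ => 1) x Q -
      ∑ q ∈ Finset.Ioc ⌊Q / 2⌋₊ M, (q : ℝ) * Int.fract (x / q) * (1 - Int.fract (x / q))|
      ≤ ∑ q ∈ Finset.Icc 1 M, (2 * (∑ e ∈ q.divisors, (e.divisors.card : ℝ)) + 1) :=
        le_trans hsum1 hsum2
    _ ≤ 3 * (M : ℝ) * H ^ 2 := hsum3
    _ ≤ 12 * (Q * (Real.log Q) ^ 2) := hfinal
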